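/- Let G be a finite group. Then the number of edges e* of P*(G) satisfies 2e* = Σ_{g ∈ G, g ≠ 1} (2·o(g) − φ(o(g)) − 3), where φ is Euler's totient function. -/

import Mathlib

def powerGraph (G : Type*) [Group G] : SimpleGraph G where
  Adj x y := x ≠ y ∧ ((∃ m : ℕ, 0 < m ∧ y = x ^ m) ∨ (∃ m : ℕ, 0 < m ∧ x = y ^ m))
  symm := ⟨fun x y h => ⟨h.1.symm, h.2.symm⟩⟩
  loopless := ⟨fun x h => h.1 rfl⟩

def powerGraphStar (G : Type*) [Group G] : SimpleGraph {g : G // g ≠ 1} :=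
  (powerGraph G).induce {g : G | g ≠ 1}

/-
Count ordered pairs of adjacent vertices, of which there are 2e*. Write x → y when y ≠ x is a
power of x; adjacency means x → y or y → x, so by inclusion–exclusion and the symmetry
(x, y) ↦ (y, x), 2e* = 2·#{x → y} − #{x → y → x}. For fixed x ≠ 1 the arrows x → y go to the
o(x) − 2 elements of ⟨x⟩ other than 1 and x, and x → y → x means ⟨y⟩ = ⟨x⟩, i.e. y is one of
the φ(o(x)) − 1 generators of ⟨x⟩ other than x.
-/

open Finset Subgroup

section Counting

variable {α β : Type*} [Fintype α]

lemma card_filter_prod_eq_sum [Fintype β] (r : α → β → Prop) [∀ x y, Decidable (r x y)] :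
    #{p : α × β | r p.1 p.2} = ∑ x, #{y | r x y} := by
  simp only [card_filter, Fintype.sum_prod_type]

lemma card_filter_subtype (p q : α → Prop) [DecidablePred p] [DecidablePred q] :
    #{y : Subtype p | q y} = #{y | p y ∧ q y} := by
  rw [← card_map (Function.Embedding.subtype p)]
  congr 1
  ext y
  simp [and_comm]

lemma card_filter_or_swap_add_card_filter_and_swap [DecidableEq α] (r : α → α → Prop)
    [DecidableRel r] :
    #{p : α × α | r p.1 p.2 ∨ r p.2 p.1} + #{p : α × α | r p.1 p.2 ∧ r p.2 p.1} =
      2 * #{p : α × α | r p.1 p.2} := by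
  have hswap : #{p : α × α | r p.2 p.1} = #{p : α × α | r p.1 p.2} :=
    card_equiv (Equiv.prodComm α α) (by simp)
  rw [filter_or, filter_and, card_union_add_card_inter, hswap, two_mul]

end Counting

lemma SimpleGraph.two_mul_ncard_edgeSet {V : Type*} [Fintype V] (Γ : SimpleGraph V)
    [DecidableRel Γ.Adj] : 2 * Γ.edgeSet.ncard = #{p : V × V | Γ.Adj p.1 p.2} := by
  rw [← Γ.two_mul_card_edgeFinset, Γ.edgeSet.ncard_eq_toFinset_card']
  rfl

lemma Nat.two_mul_sub_totient_sub_three_add_totient_sub_one {n : ℕ} (hn : 1 < n) :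
    2 * n - n.totient - 3 + (n.totient - 1) = 2 * (n - 2) := by
  have hpos := Nat.totient_pos.mpr (zero_lt_one.trans hn)
  have hlt := Nat.totient_lt n hn
  omega

section Group

variable {G : Type*} [Group G]

lemma IsOfFinOrder.exists_pos_pow_eq_iff_mem_zpowers {x : G} (hx : IsOfFinOrder x) (y : G) :
    (∃ m : ℕ, 0 < m ∧ y = x ^ m) ↔ y ∈ zpowers x := by
  refine ⟨fun ⟨m, _, hm⟩ => hm ▸ npow_mem_zpowers x m, fun h => ?_⟩
  obtain ⟨n, rfl⟩ := hx.mem_powers_iff_mem_zpowers.mpr h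
  exact ⟨n + orderOf x, by have := hx.orderOf_pos; omega,
    by rw [pow_add, pow_orderOf_eq_one, mul_one]⟩

lemma powerGraph_adj_iff [Finite G] (x y : G) :
    (powerGraph G).Adj x y ↔ x ≠ y ∧ (y ∈ zpowers x ∨ x ∈ zpowers y) := by
  rw [← (isOfFinOrder_of_finite x).exists_pos_pow_eq_iff_mem_zpowers,
    ← (isOfFinOrder_of_finite y).exists_pos_pow_eq_iff_mem_zpowers]
  rfl

lemma zpowers_eq_zpowers_iff_mem_and_orderOf_eq [Finite G] (x y : G) :
    zpowers y = zpowers x ↔ y ∈ zpowers x ∧ orderOf y = orderOf x := by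
  refine ⟨fun h => ⟨h ▸ mem_zpowers y, by rw [← Nat.card_zpowers, h, Nat.card_zpowers]⟩,
    fun ⟨hmem, hord⟩ => ?_⟩
  exact eq_of_le_of_card_ge (zpowers_le.mpr hmem) (by rw [Nat.card_zpowers, Nat.card_zpowers, hord])

lemma one_lt_orderOf [Finite G] {x : G} (hx : x ≠ 1) : 1 < orderOf x :=
  lt_of_le_of_ne (orderOf_pos x) fun h => hx (orderOf_eq_one_iff.mp h.symm)

lemma mem_zpowers_and_mem_zpowers_iff (x y : G) :
    y ∈ zpowers x ∧ x ∈ zpowers y ↔ zpowers y = zpowers x := by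
  rw [← zpowers_le, ← zpowers_le, le_antisymm_iff]

lemma nat_card_zpowers_eq_zpowers [Finite G] (x : G) :
    Nat.card {y : G // zpowers y = zpowers x} = (orderOf x).totient := by
  have := Fintype.ofFinite G
  rw [← IsCyclic.card_orderOf_eq_totient (α := zpowers x) (d := orderOf x)
    (by rw [Fintype.card_zpowers]), ← Fintype.card_subtype, ← Nat.card_eq_fintype_card]
  refine Nat.card_congr <| (Equiv.subtypeEquivRight fun y =>
    zpowers_eq_zpowers_iff_mem_and_orderOf_eq x y).trans <|
    (Equiv.subtypeSubtypeEquivSubtypeInter (· ∈ zpowers x) (orderOf · = orderOf x)).symm.trans <|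
    Equiv.subtypeEquivRight fun a => ?_
  rw [orderOf_coe]

variable [Fintype G] [DecidableEq G]

lemma card_filter_ne_mem_zpowers (x : {g : G // g ≠ 1}) :
    #{y : {g : G // g ≠ 1} | (x : G) ≠ y ∧ (y : G) ∈ zpowers (x : G)} = orderOf (x : G) - 2 := by
  rw [card_filter_subtype (· ≠ 1) fun y => (x : G) ≠ y ∧ y ∈ zpowers (x : G)]
  have herase : ({y | y ≠ 1 ∧ (x : G) ≠ y ∧ y ∈ zpowers (x : G)} : Finset G) =
      (({y | y ∈ zpowers (x : G)} : Finset G).erase 1).erase x := by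
    ext y
    simp only [mem_filter, mem_univ, true_and, mem_erase]
    tauto
  rw [herase, card_erase_of_mem, card_erase_of_mem, ← Fintype.card_subtype,
    Fintype.card_zpowers]
  · rfl
  · simp [one_mem]
  · simp [x.2, mem_zpowers]

lemma card_filter_ne_mem_zpowers_and_mem_zpowers (x : {g : G // g ≠ 1}) :
    #{y : {g : G // g ≠ 1} | (x : G) ≠ y ∧ (y : G) ∈ zpowers (x : G) ∧ (x : G) ∈ zpowers (y : G)}
      = (orderOf (x : G)).totient - 1 := by
  rw [card_filter_subtype (· ≠ 1) fun y => (x : G) ≠ y ∧ y ∈ zpowers (x : G) ∧ (x : G) ∈ zpowers y]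
  have herase : ({y | y ≠ 1 ∧ (x : G) ≠ y ∧ y ∈ zpowers (x : G) ∧ (x : G) ∈ zpowers y} : Finset G) =
      ({y | y ∈ zpowers (x : G) ∧ (x : G) ∈ zpowers y} : Finset G).erase x := by
    ext y
    simp only [mem_filter, mem_univ, true_and, mem_erase, ne_comm (b := y)]
    refine ⟨fun h => h.2, fun h => ⟨?_, h⟩⟩
    rintro rfl
    exact x.2 (by simpa using h.2.2)
  rw [herase, card_erase_of_mem (by simp [mem_zpowers]), ← nat_card_zpowers_eq_zpowers,
    ← Nat.card_congr (Equiv.subtypeEquivRight (mem_zpowers_and_mem_zpowers_iff (x : G))),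
    Nat.card_eq_fintype_card, Fintype.card_subtype]

end Group

theorem powerGraphStar_edge_count (G : Type*) [Group G] [Fintype G] [DecidableEq G] :
    2 * ((powerGraphStar G).edgeSet.ncard) =
      ∑ g ∈ Finset.univ.erase (1 : G), (2 * orderOf g - Nat.totient (orderOf g) - 3) := by
  classical
  let r (x y : {g : G // g ≠ 1}) : Prop := (x : G) ≠ y ∧ (y : G) ∈ zpowers (x : G)
  have hedges : 2 * (powerGraphStar G).edgeSet.ncard =
      #{p : {g : G // g ≠ 1} × {g : G // g ≠ 1} | r p.1 p.2 ∨ r p.2 p.1} := by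
    rw [SimpleGraph.two_mul_ncard_edgeSet]
    congr! 2 with p
    change (powerGraph G).Adj p.1 p.2 ↔ _
    rw [powerGraph_adj_iff, and_or_left]
    simp only [r, ne_comm (a := (p.2 : G))]
  have hmutual (x : {g : G // g ≠ 1}) : #{y | r x y ∧ r y x} = (orderOf (x : G)).totient - 1 := by
    rw [← card_filter_ne_mem_zpowers_and_mem_zpowers]
    congr! 2 with y
    simp only [r, ne_comm]
    tauto
  have hcount := card_filter_or_swap_add_card_filter_and_swap r
  rw [← hedges, card_filter_prod_eq_sum r, card_filter_prod_eq_sum fun x y => r x y ∧ r y x,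
    sum_congr rfl fun x _ => hmutual x, sum_congr rfl fun x _ => card_filter_ne_mem_zpowers x,
    mul_sum, ← sum_congr rfl fun x _ =>
      Nat.two_mul_sub_totient_sub_three_add_totient_sub_one (one_lt_orderOf x.2),
    sum_add_distrib] at hcount
  rw [sum_subtype (univ.erase 1) (p := (· ≠ 1)) (by simp)]
  omega
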